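/- The function W : (ℂ∖{0})² → ℂ defined by W(y_1, y_2) = 3y_1 + y_2 + y_1^{−1} + y_2^{−1} + 5·y_1 y_2^{−1} + y_1^{2} y_2^{−1} has exactly 6 critical points, and each of these critical points is nondegenerate. -/

import Mathlib

/-!
Since `W = 3y₁ + y₁⁻¹ + y₂ + (1 + 5y₁ + y₁²) y₂⁻¹`, the critical equations are
`y₂² = 1 + 5y₁ + y₁²` and `y₂ (1 - 3y₁²) = (5 + 2y₁) y₁²`. The second one determines `y₂` from
`y₁`, and substituting into the first leaves the sextic `critPoly` in `y₁`. This sextic is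
separable, so the critical points are the six points `(t, critY₂ t)` over its roots `t`. Each
auxiliary polynomial that must not vanish at a root of `critPoly` (`1 - 3t²`, `5 + 2t`,
`critPoly'`, and the Hessian after eliminating `y₂`) is coprime to `critPoly`; the multipliers in
the `linear_combination` certificates are Bézout coefficients from the extended Euclidean
algorithm over `ℚ`, scaled to integers.
-/

/-- The potential function of the monotone fiber `L(1.5,2)` in `X̂₄` with the chosen bulk deformation (energy factor dropped). -/
noncomputable def W : ℂ → ℂ → ℂ := fun y₁ y₂ =>
  3 * y₁ + y₂ + y₁⁻¹ + y₂⁻¹ + 5 * y₁ * y₂⁻¹ + y₁ ^ 2 * y₂⁻¹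

/-- A point of `(ℂ∖{0})²` is a critical point of `W` if both partial
derivatives of `W` vanish there. -/
def IsCritPt (p : ℂ × ℂ) : Prop :=
  p.1 ≠ 0 ∧ p.2 ≠ 0 ∧
    deriv (fun z => W z p.2) p.1 = 0 ∧ deriv (fun z => W p.1 z) p.2 = 0

/-- The Hessian determinant
`(∂²W/∂y₁²)(∂²W/∂y₂²) - (∂²W/∂y₁∂y₂)²` of `W` at a point. -/
noncomputable def hessDet (p : ℂ × ℂ) : ℂ :=
  deriv (deriv (fun z => W z p.2)) p.1 * deriv (deriv (fun z => W p.1 z)) p.2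
    - (deriv (fun w => deriv (fun z => W z w) p.1) p.2) ^ 2


open Polynomial Filter Topology

theorem Polynomial.separable_of_eval_derivative_ne_zero {K : Type*} [Field K] [IsAlgClosed K]
    {p : K[X]} (h : ∀ x, p.IsRoot x → (derivative p).eval x ≠ 0) : p.Separable := by
  rw [separable_def, isCoprime_iff_aeval_ne_zero_of_isAlgClosed (k := K) K]
  intro x
  simp only [coe_aeval_eq_eval]
  exact or_iff_not_imp_left.mpr fun hx => h x (not_not.mp hx)

theorem Polynomial.ncard_setOf_isRoot {K : Type*} [Field K] [IsAlgClosed K] {p : K[X]}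
    (hp : p.Separable) : {x | p.IsRoot x}.ncard = p.natDegree := by
  classical
  have hroots : {x | p.IsRoot x} = (p.roots.toFinset : Set K) := by
    ext x
    simp [mem_roots hp.ne_zero]
  rw [hroots, Set.ncard_coe_finset, Multiset.toFinset_card_of_nodup (nodup_roots hp),
    IsAlgClosed.card_roots_eq_natDegree]

section Derivatives

variable {y₁ y₂ : ℂ}

theorem hasDerivAt_W_fst (y₂ : ℂ) (h₁ : y₁ ≠ 0) :
    HasDerivAt (W · y₂) (3 - (y₁ ^ 2)⁻¹ + (5 + 2 * y₁) * y₂⁻¹) y₁ :=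
  (((((hasDerivAt_id' y₁).const_mul 3).add_const y₂).add (hasDerivAt_inv h₁)).add_const y₂⁻¹
    |>.add (((hasDerivAt_id' y₁).const_mul 5).mul_const y₂⁻¹)
    |>.add ((hasDerivAt_pow 2 y₁).mul_const y₂⁻¹)).congr_deriv (by ring)

theorem hasDerivAt_W_snd (y₁ : ℂ) (h₂ : y₂ ≠ 0) :
    HasDerivAt (W y₁ ·) (1 - (1 + 5 * y₁ + y₁ ^ 2) * (y₂ ^ 2)⁻¹) y₂ :=
  ((((hasDerivAt_id' y₂).const_add (3 * y₁)).add_const y₁⁻¹).add (hasDerivAt_inv h₂)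
    |>.add ((hasDerivAt_inv h₂).const_mul (5 * y₁))
    |>.add ((hasDerivAt_inv h₂).const_mul (y₁ ^ 2))).congr_deriv (by ring)

theorem deriv_W_fst (y₂ : ℂ) (h₁ : y₁ ≠ 0) :
    deriv (W · y₂) y₁ = 3 - (y₁ ^ 2)⁻¹ + (5 + 2 * y₁) * y₂⁻¹ :=
  (hasDerivAt_W_fst y₂ h₁).deriv

theorem deriv_W_snd (y₁ : ℂ) (h₂ : y₂ ≠ 0) :
    deriv (W y₁ ·) y₂ = 1 - (1 + 5 * y₁ + y₁ ^ 2) * (y₂ ^ 2)⁻¹ :=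
  (hasDerivAt_W_snd y₁ h₂).deriv

theorem deriv_deriv_W_fst (y₂ : ℂ) (h₁ : y₁ ≠ 0) :
    deriv (deriv (W · y₂)) y₁ = 2 * (y₁ ^ 3)⁻¹ + 2 * y₂⁻¹ := by
  have hd : deriv (W · y₂) =ᶠ[𝓝 y₁] fun z => 3 - (z ^ 2)⁻¹ + (5 + 2 * z) * y₂⁻¹ :=
    (eventually_ne_nhds h₁).mono fun z hz => deriv_W_fst y₂ hz
  have h : HasDerivAt (fun z => 3 - (z ^ 2)⁻¹ + (5 + 2 * z) * y₂⁻¹)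
      (2 * (y₁ ^ 3)⁻¹ + 2 * y₂⁻¹) y₁ :=
    ((hasDerivAt_const y₁ 3).sub ((hasDerivAt_pow 2 y₁).inv (pow_ne_zero 2 h₁))
      |>.add (((hasDerivAt_id' y₁).const_mul 2).const_add 5 |>.mul_const y₂⁻¹)).congr_deriv
      (by field_simp; ring)
  rw [hd.deriv_eq, h.deriv]

theorem deriv_deriv_W_snd (y₁ : ℂ) (h₂ : y₂ ≠ 0) :
    deriv (deriv (W y₁ ·)) y₂ = 2 * (1 + 5 * y₁ + y₁ ^ 2) * (y₂ ^ 3)⁻¹ := by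
  have hd : deriv (W y₁ ·) =ᶠ[𝓝 y₂] fun z => 1 - (1 + 5 * y₁ + y₁ ^ 2) * (z ^ 2)⁻¹ :=
    (eventually_ne_nhds h₂).mono fun z hz => deriv_W_snd y₁ hz
  have h : HasDerivAt (fun z => 1 - (1 + 5 * y₁ + y₁ ^ 2) * (z ^ 2)⁻¹)
      (2 * (1 + 5 * y₁ + y₁ ^ 2) * (y₂ ^ 3)⁻¹) y₂ :=
    ((hasDerivAt_const y₂ 1).sub (((hasDerivAt_pow 2 y₂).inv (pow_ne_zero 2 h₂)).const_mul
      (1 + 5 * y₁ + y₁ ^ 2))).congr_deriv (by field_simp; ring)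
  rw [hd.deriv_eq, h.deriv]

theorem deriv_deriv_W_fst_snd (h₁ : y₁ ≠ 0) (h₂ : y₂ ≠ 0) :
    deriv (fun w => deriv (W · w) y₁) y₂ = -(5 + 2 * y₁) * (y₂ ^ 2)⁻¹ := by
  have hd : (fun w => deriv (W · w) y₁) = fun w => 3 - (y₁ ^ 2)⁻¹ + (5 + 2 * y₁) * w⁻¹ :=
    funext fun w => deriv_W_fst w h₁
  rw [hd, ((hasDerivAt_inv h₂).const_mul (5 + 2 * y₁)).const_add (3 - (y₁ ^ 2)⁻¹) |>.deriv]
  ring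

end Derivatives

theorem isCritPt_iff {y₁ y₂ : ℂ} :
    IsCritPt (y₁, y₂) ↔ y₁ ≠ 0 ∧ y₂ ≠ 0 ∧
      y₂ * (1 - 3 * y₁ ^ 2) = (5 + 2 * y₁) * y₁ ^ 2 ∧ y₂ ^ 2 = 1 + 5 * y₁ + y₁ ^ 2 := by
  refine and_congr_right fun h₁ => and_congr_right fun h₂ => ?_
  rw [deriv_W_fst y₂ h₁, deriv_W_snd y₁ h₂]
  refine and_congr ⟨fun h => ?_, fun h => ?_⟩ ⟨fun h => ?_, fun h => ?_⟩
  · field_simp at h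
    linear_combination -h
  · field_simp
    linear_combination -h
  · field_simp at h
    linear_combination h
  · field_simp
    linear_combination h

noncomputable def critPoly : ℂ[X] :=
  5 * X ^ 6 + 25 * X ^ 5 - 22 * X ^ 4 - 30 * X ^ 3 - 5 * X ^ 2 + 5 * X + 1

theorem eval_critPoly (t : ℂ) :
    critPoly.eval t = 5 * t ^ 6 + 25 * t ^ 5 - 22 * t ^ 4 - 30 * t ^ 3 - 5 * t ^ 2 + 5 * t + 1 := by
  simp [critPoly]

theorem eval_derivative_critPoly (t : ℂ) :
    (derivative critPoly).eval t =
      30 * t ^ 5 + 125 * t ^ 4 - 88 * t ^ 3 - 90 * t ^ 2 - 10 * t + 5 := by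
  simp [critPoly]
  ring

theorem natDegree_critPoly : critPoly.natDegree = 6 := by
  unfold critPoly
  compute_degree!

section Roots

variable {t : ℂ}

theorem ne_zero_of_isRoot_critPoly (ht : critPoly.IsRoot t) : t ≠ 0 := by
  rintro rfl
  simp [IsRoot.def, eval_critPoly] at ht

theorem one_sub_three_mul_sq_ne_zero_of_isRoot_critPoly (ht : critPoly.IsRoot t) :
    1 - 3 * t ^ 2 ≠ 0 := by
  rw [IsRoot.def, eval_critPoly] at ht
  intro h
  have : (5041 : ℂ) = 0 := by
    linear_combination (-2133 + 1620 * t) * ht +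
      (7174 + 9045 * t + 2757 * t ^ 2 - 28755 * t ^ 3 + 9945 * t ^ 4 + 2700 * t ^ 5) * h
  norm_num at this

theorem five_add_two_mul_ne_zero_of_isRoot_critPoly (ht : critPoly.IsRoot t) :
    5 + 2 * t ≠ 0 := by
  rw [IsRoot.def, eval_critPoly] at ht
  intro h
  have : (105861 : ℂ) = 0 := by
    linear_combination (-64 : ℂ) * ht +
      (21185 - 8410 * t + 3300 * t ^ 2 - 1704 * t ^ 3 + 400 * t ^ 4 + 160 * t ^ 5) * h
  norm_num at this

theorem eval_derivative_critPoly_ne_zero_of_isRoot (ht : critPoly.IsRoot t) :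
    (derivative critPoly).eval t ≠ 0 := by
  rw [IsRoot.def, eval_critPoly] at ht
  rw [eval_derivative_critPoly]
  intro h
  have : (88097206617 : ℂ) = 0 := by
    linear_combination
      (-39767621483 + 448331460480 * t + 674030237730 * t ^ 2 - 748039925300 * t ^ 3
        - 186979890000 * t ^ 4) * ht +
      (25572965620 + 1247260627 * t - 160097227095 * t ^ 2 - 162356089080 * t ^ 3
        + 150642750050 * t ^ 4 + 31163315000 * t ^ 5) * h
  norm_num at this

end Roots

theorem separable_critPoly : critPoly.Separable :=
  separable_of_eval_derivative_ne_zero fun _ => eval_derivative_critPoly_ne_zero_of_isRoot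

noncomputable def critY₂ (t : ℂ) : ℂ := (5 + 2 * t) * t ^ 2 / (1 - 3 * t ^ 2)

theorem isCritPt_iff_isRoot_critPoly {y₁ y₂ : ℂ} :
    IsCritPt (y₁, y₂) ↔ critPoly.IsRoot y₁ ∧ y₂ = critY₂ y₁ := by
  rw [isCritPt_iff, critY₂]
  constructor
  · rintro ⟨h₁, -, e₁, e₂⟩
    have h₃ : 1 - 3 * y₁ ^ 2 ≠ 0 := by
      intro h
      have h₅ : 5 + 2 * y₁ = 0 :=
        (mul_eq_zero.mp (by rw [← e₁, h, mul_zero])).resolve_right (pow_ne_zero 2 h₁)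
      have : (71 : ℂ) = 0 := by linear_combination -4 * h - (6 * y₁ - 15) * h₅
      norm_num at this
    refine ⟨?_, (eq_div_iff h₃).mpr e₁⟩
    rw [IsRoot.def, eval_critPoly]
    linear_combination (y₂ * (1 - 3 * y₁ ^ 2) + (5 + 2 * y₁) * y₁ ^ 2) * e₁ -
      (1 - 3 * y₁ ^ 2) ^ 2 * e₂
  · rintro ⟨ht, rfl⟩
    have h₁ := ne_zero_of_isRoot_critPoly ht
    have h₃ := one_sub_three_mul_sq_ne_zero_of_isRoot_critPoly ht
    have h₅ := five_add_two_mul_ne_zero_of_isRoot_critPoly ht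
    rw [IsRoot.def, eval_critPoly] at ht
    refine ⟨h₁, by positivity, div_mul_cancel₀ _ h₃, ?_⟩
    rw [div_pow, div_eq_iff (pow_ne_zero 2 h₃)]
    linear_combination -ht

theorem hessDet_eq {y₁ y₂ : ℂ} (h₁ : y₁ ≠ 0) (h₂ : y₂ ≠ 0) :
    hessDet (y₁, y₂) = (2 * (y₁ ^ 3)⁻¹ + 2 * y₂⁻¹) * (2 * (1 + 5 * y₁ + y₁ ^ 2) * (y₂ ^ 3)⁻¹)
      - (-(5 + 2 * y₁) * (y₂ ^ 2)⁻¹) ^ 2 := by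
  rw [hessDet, deriv_deriv_W_fst y₂ h₁, deriv_deriv_W_snd y₁ h₂, deriv_deriv_W_fst_snd h₁ h₂]

theorem hessDet_ne_zero_of_isCritPt {p : ℂ × ℂ} (hp : IsCritPt p) : hessDet p ≠ 0 := by
  obtain ⟨y₁, y₂⟩ := p
  obtain ⟨h₁, h₂, e₁, e₂⟩ := isCritPt_iff.mp hp
  have ht := (isCritPt_iff_isRoot_critPoly.mp hp).1
  rw [IsRoot.def, eval_critPoly] at ht
  rw [hessDet_eq h₁ h₂]
  intro hH
  field_simp at hH
  have hG : 4 * (1 + 5 * y₁ + y₁ ^ 2) * (y₂ + y₁ ^ 3) - (5 + 2 * y₁) ^ 2 * y₁ ^ 3 = 0 := by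
    linear_combination hH
  have hs : 20 * y₁ ^ 2 + 87 * y₁ ^ 3 + 60 * y₁ ^ 4 + 71 * y₁ ^ 5 = 0 := by
    linear_combination (1 - 3 * y₁ ^ 2) * hG - 4 * (1 + 5 * y₁ + y₁ ^ 2) * e₁
  have : (1240805727 : ℂ) = 0 := by
    linear_combination (1240805727 - 6204028635 * y₁ - 125097393390 * y₁ ^ 2
        - 72969120295 * y₁ ^ 3 - 114264167512 * y₁ ^ 4) * ht +
      (8116078260 - 71934637 * y₁ - 39295335660 * y₁ ^ 2 - 43359330729 * y₁ ^ 3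
        + 38572442925 * y₁ ^ 4 + 8046772360 * y₁ ^ 5) * hs
  norm_num at this

/-- `W` has exactly 6 critical points in `(ℂ∖{0})²`, and each of them is
nondegenerate (nonvanishing Hessian determinant). -/
theorem W_critical_points :
    {p : ℂ × ℂ | IsCritPt p}.ncard = 6 ∧
      ∀ p : ℂ × ℂ, IsCritPt p → hessDet p ≠ 0 := by
  refine ⟨?_, fun p => hessDet_ne_zero_of_isCritPt⟩
  have hcrit :
      {p : ℂ × ℂ | IsCritPt p} = (fun t => (t, critY₂ t)) '' {t | critPoly.IsRoot t} := by
    ext ⟨y₁, y₂⟩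
    simp [isCritPt_iff_isRoot_critPoly, eq_comm]
  rw [hcrit, Set.ncard_image_of_injective _ fun a b h => congrArg Prod.fst h,
    ncard_setOf_isRoot separable_critPoly, natDegree_critPoly]
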